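/- (Recovery from the loss of two information nodes) Let k ≥ 3 be odd and let j_0, j_1 ∈ {0,…,k−1} be distinct. If two information arrays a, a′ : {0,…,2^{k−1}−1} × {0,…,k−1} → GF(2) satisfy a_{i′,j′} = a′_{i′,j′} for all i′ and all j′ ∉ {j_0, j_1}, h_i(a) = h_i(a′) for all i, and b_i(a) = b_i(a′) for all i, then a = a′. (The information array is determined by the k−2 surviving information columns together with both parity nodes.) -/

import Mathlib

/-!
Put `d = a - a'`: it vanishes outside the lost columns and, by the horizontal parities,
`d i j₀ = d i j₁`. As `k` is odd, exactly one lost column `p` lies in the window of the other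
one, `q`. Since `ell (ell r p) t` differs in darkness from `r` exactly in columns `p` and `t`,
the butterfly parity of row `ell r p` writes `d r p` as a sum of `d (ell (ell r p) t) p`
over `t ≠ p`, and a term survives only if column `t` is active for `r` but no longer for
`ell (ell r p) t`. Induction on the number of active columns gives `d = 0`.
-/

/-- The `j`-th bit of `i` (`j ≥ 0`). -/
def bitp (i j : ℕ) : Bool := i.testBit j

/-- The `(j-1)`-th bit of `i`, with the convention that the bit at position `-1` is `0`. -/
def bitm (i j : ℕ) : Bool := if j = 0 then false else i.testBit (j - 1)

/-- `i` is dark in column `j` iff `i(j) = i(j-1)`. -/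
def dark (i j : ℕ) : Prop := bitp i j = bitm i j

instance (i j : ℕ) : Decidable (dark i j) := by unfold dark; infer_instance

/-- `ℓ_{i,j} = i ⊕ (2^j - 1)`. -/
def ell (i j : ℕ) : ℕ := i ^^^ (2 ^ j - 1)

/-- The set `B_{i,j}`. -/
def Bset (k i j : ℕ) : Finset (ℕ × ℕ) :=
  if dark i j then
    ((Finset.range k).filter
        (fun j' : ℕ => ((j : ℤ) - (j' : ℤ)) % (k : ℤ) ≤ ((k / 2 : ℕ) : ℤ))).image
      (fun j' => (i, j'))
  else {(i, j)}

/-- The butterfly support set `B_i = ⋃_{j ∈ [k]} B_{ℓ_{i,j}, j}`. -/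
def Bline (k i : ℕ) : Finset (ℕ × ℕ) :=
  (Finset.range k).biUnion (fun j => Bset k (ell i j) j)

/-- Horizontal parity `h_i(a)`. -/
def hpar (k : ℕ) (a : ℕ → ℕ → ZMod 2) (i : ℕ) : ZMod 2 :=
  ∑ j ∈ Finset.range k, a i j

/-- Butterfly parity `b_i(a)`. -/
def bpar (k : ℕ) (a : ℕ → ℕ → ZMod 2) (i : ℕ) : ZMod 2 :=
  ∑ p ∈ Bline k i, a p.1 p.2


lemma dark_ell (r j t : ℕ) : dark (ell r j) t ↔ (dark r t ↔ (t = 0 ↔ t = j)) := by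
  unfold dark bitp bitm ell
  rcases Nat.eq_zero_or_pos t with rfl | ht
  · simp only [Nat.testBit_xor, Nat.testBit_two_pow_sub_one]
    cases r.testBit 0 <;> by_cases hj : j = 0 <;> simp [hj, Nat.pos_iff_ne_zero, eq_comm]
  · rw [if_neg ht.ne', if_neg ht.ne']
    simp only [Nat.testBit_xor, Nat.testBit_two_pow_sub_one]
    by_cases h1 : t < j <;> by_cases h2 : t - 1 < j <;>
      cases r.testBit t <;> cases r.testBit (t - 1) <;> simp [h1, h2] <;> omega

lemma dark_ell_ell (r p j t : ℕ) : dark (ell (ell r p) j) t ↔ (dark r t ↔ (t = p ↔ t = j)) := by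
  rw [dark_ell, dark_ell]
  tauto

lemma ell_ell_self (r j : ℕ) : ell (ell r j) j = r := Nat.xor_xor_cancel_right r _

lemma ell_injective (i : ℕ) : Function.Injective (ell i) := by
  intro x y h
  have hmask : 2 ^ x - 1 = 2 ^ y - 1 := Nat.xor_right_injective h
  have := Nat.one_le_two_pow (n := x)
  have := Nat.one_le_two_pow (n := y)
  exact Nat.pow_right_injective le_rfl (show 2 ^ x = 2 ^ y by omega)

lemma ell_lt_two_pow {r n : ℕ} (hr : r < 2 ^ n) {j : ℕ} (hj : j ≤ n) : ell r j < 2 ^ n := by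
  have := Nat.pow_le_pow_right two_pos hj
  have := Nat.one_le_two_pow (n := j)
  exact Nat.xor_lt_two_pow hr (by omega)

lemma ell_ell_lt_two_pow {r k p t : ℕ} (hr : r < 2 ^ (k - 1)) (hp : p < k) (ht : t < k) :
    ell (ell r p) t < 2 ^ (k - 1) :=
  ell_lt_two_pow (ell_lt_two_pow hr (by omega)) (by omega)

/-- The cyclic window `{j' : (j - j') mod k ≤ ⌊k/2⌋}` of columns of `B_{i,j}` for dark `i`. -/
def window (k j : ℕ) : Finset ℕ :=
  (Finset.range k).filter (fun j' : ℕ => ((j : ℤ) - (j' : ℤ)) % (k : ℤ) ≤ ((k / 2 : ℕ) : ℤ))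

lemma self_mem_window {k j : ℕ} (hj : j < k) : j ∈ window k j := by
  simp only [window, Finset.mem_filter, Finset.mem_range, sub_self, Int.zero_emod]
  exact ⟨hj, by positivity⟩

lemma mem_window_iff_not_mem_window {k j j' : ℕ} (hk : Odd k) (hj : j < k) (hj' : j' < k)
    (hne : j ≠ j') : j' ∈ window k j ↔ j ∉ window k j' := by
  obtain ⟨m, rfl⟩ := hk
  have hm : (2 * m + 1) / 2 = m := by omega
  simp only [window, Finset.mem_filter, Finset.mem_range, hj, hj', true_and, hm, not_le]
  rcases Nat.lt_or_gt_of_ne hne with h | h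
  · rw [← Int.add_emod_right, Int.emod_eq_of_lt (by omega) (by omega),
      Int.emod_eq_of_lt (by omega) (by omega)]
    push_cast
    omega
  · rw [← Int.add_emod_right ((j' : ℤ) - j), Int.emod_eq_of_lt (by omega) (by omega),
      Int.emod_eq_of_lt (by omega) (by omega)]
    push_cast
    omega

/-- The columns of `B_{ℓ,t}`, where `D` stands for `dark ℓ t`. -/
def bcols (k t : ℕ) (D : Prop) [Decidable D] : Finset ℕ := if D then window k t else {t}

lemma bcols_subset_range {k t : ℕ} (ht : t < k) (D : Prop) [Decidable D] :
    bcols k t D ⊆ Finset.range k := by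
  unfold bcols
  split_ifs
  · exact Finset.filter_subset _ _
  · simpa using ht

lemma Bset_eq_image (k ℓ t : ℕ) : Bset k ℓ t = (bcols k t (dark ℓ t)).image (Prod.mk ℓ) := by
  unfold Bset bcols window
  split_ifs <;> simp

lemma bpar_eq_sum_sum_Bset (k : ℕ) (a : ℕ → ℕ → ZMod 2) (i : ℕ) :
    bpar k a i = ∑ j ∈ Finset.range k, ∑ x ∈ Bset k (ell i j) j, a x.1 x.2 := by
  refine Finset.sum_biUnion fun x _ y _ hxy => Finset.disjoint_left.2 fun z hzx hzy => hxy ?_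
  dsimp only at hzx hzy
  rw [Bset_eq_image, Finset.mem_image] at hzx hzy
  obtain ⟨_, _, rfl⟩ := hzx
  obtain ⟨_, _, hz⟩ := hzy
  exact ell_injective i (Prod.mk.inj hz).1.symm

lemma hpar_sub (k : ℕ) (a a' : ℕ → ℕ → ZMod 2) (i : ℕ) :
    hpar k (a - a') i = hpar k a i - hpar k a' i :=
  Finset.sum_sub_distrib _ _

lemma bpar_sub (k : ℕ) (a a' : ℕ → ℕ → ZMod 2) (i : ℕ) :
    bpar k (a - a') i = bpar k a i - bpar k a' i :=
  Finset.sum_sub_distrib _ _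

theorem eq_zero_of_eq_sum_of_descent {α ι R : Type*} [NonUnitalNonAssocSemiring R]
    {P : α → Prop} {f : α → R} (μ : α → ℕ) (s : Finset ι) (c : α → ι → R) (g : α → ι → α)
    (hrec : ∀ a, P a → f a = ∑ t ∈ s, c a t * f (g a t))
    (hdesc : ∀ a, P a → ∀ t ∈ s, c a t ≠ 0 → P (g a t) ∧ μ (g a t) < μ a) :
    ∀ a, P a → f a = 0 := by
  intro a
  induction hμ : μ a using Nat.strong_induction_on generalizing a with
  | _ n ih =>
    intro ha
    rw [hrec a ha]
    refine Finset.sum_eq_zero fun t ht => ?_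
    by_cases hc : c a t = 0
    · rw [hc, zero_mul]
    · obtain ⟨hP, hlt⟩ := hdesc a ha t ht hc
      rw [ih _ (hμ ▸ hlt) _ rfl hP, mul_zero]

section TwoColumns

variable {k p q : ℕ} {d : ℕ → ℕ → ZMod 2}

lemma eq_of_hpar_eq_zero {i : ℕ} (hp : p < k) (hq : q < k) (hne : p ≠ q)
    (hsupp : ∀ j < k, j ≠ p → j ≠ q → d i j = 0) (h : hpar k d i = 0) : d i q = d i p := by
  rw [hpar, Finset.sum_eq_add_of_mem p q (Finset.mem_range.2 hp) (Finset.mem_range.2 hq) hne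
    fun j hj hjpq => hsupp j (Finset.mem_range.1 hj) hjpq.1 hjpq.2] at h
  exact (CharTwo.add_eq_zero.1 h).symm

lemma sum_eq_of_two_columns {ℓ : ℕ} {S : Finset ℕ} (hS : S ⊆ Finset.range k) (hne : p ≠ q)
    (hsupp : ∀ j < k, j ≠ p → j ≠ q → d ℓ j = 0) (hrow : d ℓ q = d ℓ p) :
    ∑ j ∈ S, d ℓ j = ((if p ∈ S then 1 else 0) + (if q ∈ S then 1 else 0)) * d ℓ p := by
  have hterm : ∀ j ∈ S, d ℓ j = (if p = j then d ℓ p else 0) + (if q = j then d ℓ p else 0) := by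
    intro j hj
    by_cases hjp : p = j
    · subst hjp
      simp [hne.symm]
    by_cases hjq : q = j
    · subst hjq
      simp [hjp, hrow]
    simp [hjp, hjq, hsupp j (Finset.mem_range.1 (hS hj)) (Ne.symm hjp) (Ne.symm hjq)]
  rw [Finset.sum_congr rfl hterm, Finset.sum_add_distrib, Finset.sum_ite_eq, Finset.sum_ite_eq,
    add_mul, ite_mul, ite_mul, one_mul, zero_mul]

def coverParity (k p q t : ℕ) (D : Prop) [Decidable D] : ZMod 2 :=
  (if p ∈ bcols k t D then 1 else 0) + (if q ∈ bcols k t D then 1 else 0)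

lemma sum_Bset_eq_coverParity {ℓ t : ℕ} (ht : t < k) (hne : p ≠ q)
    (hsupp : ∀ j < k, j ≠ p → j ≠ q → d ℓ j = 0) (hrow : d ℓ q = d ℓ p) :
    ∑ x ∈ Bset k ℓ t, d x.1 x.2 = coverParity k p q t (dark ℓ t) * d ℓ p := by
  rw [Bset_eq_image, Finset.sum_image fun _ _ _ _ h => (Prod.mk.inj h).2]
  exact sum_eq_of_two_columns (bcols_subset_range ht _) hne hsupp hrow

lemma coverParity_self (hp : p < k) (hqp : q ∉ window k p) (D : Prop) [Decidable D] :
    coverParity k p q p D = 1 := by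
  have hne : q ≠ p := by rintro rfl; exact hqp (self_mem_window hp)
  by_cases hD : D <;> simp [coverParity, bcols, hD, self_mem_window hp, hqp, hne]

lemma coverParity_ne_zero {t : ℕ} (hq : q < k) (hpq : p ∈ window k q) (htp : t ≠ p)
    {D : Prop} [Decidable D] (h : coverParity k p q t D ≠ 0) : D ↔ t ≠ q := by
  by_cases hD : D
  · simp only [hD, true_iff]
    rintro rfl
    simp only [coverParity, bcols, hD, ↓reduceIte, hpq, self_mem_window hq, ne_eq] at h
    exact h rfl
  · simpa [coverParity, bcols, hD, htp.symm, eq_comm] using h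

lemma eq_sum_coverParity (hp : p < k) (hqp : q ∉ window k p) (hne : p ≠ q)
    (hsupp : ∀ i < 2 ^ (k - 1), ∀ j < k, j ≠ p → j ≠ q → d i j = 0)
    (hrow : ∀ i < 2 ^ (k - 1), d i q = d i p) (hbut : ∀ i < 2 ^ (k - 1), bpar k d i = 0)
    {r : ℕ} (hr : r < 2 ^ (k - 1)) :
    d r p = ∑ t ∈ (Finset.range k).erase p,
      coverParity k p q t (¬dark r t) * d (ell (ell r p) t) p := by
  have h := hbut (ell r p) (ell_lt_two_pow hr (by omega))
  rw [bpar_eq_sum_sum_Bset, ← Finset.add_sum_erase _ _ (Finset.mem_range.2 hp), ell_ell_self,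
    sum_Bset_eq_coverParity hp hne (hsupp r hr) (hrow r hr), coverParity_self hp hqp,
    one_mul] at h
  have hterm : ∀ t ∈ (Finset.range k).erase p,
      ∑ x ∈ Bset k (ell (ell r p) t) t, d x.1 x.2 =
        coverParity k p q t (¬dark r t) * d (ell (ell r p) t) p := by
    intro t ht
    obtain ⟨htp, htk⟩ := Finset.mem_erase.1 ht
    have hℓ := ell_ell_lt_two_pow hr hp (Finset.mem_range.1 htk)
    rw [sum_Bset_eq_coverParity (Finset.mem_range.1 htk) hne (hsupp _ hℓ) (hrow _ hℓ)]
    simp only [dark_ell_ell, htp, iff_true, iff_false]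
  rw [Finset.sum_congr rfl hterm] at h
  exact CharTwo.add_eq_zero.1 h

/-- The columns `t ≠ p` through which the recursion for row `r` actually passes. -/
def activeCols (k p q r : ℕ) : Finset ℕ :=
  ((Finset.range k).erase p).filter fun t => coverParity k p q t (¬dark r t) ≠ 0

lemma activeCols_ell_ell_ssubset (hq : q < k) (hpq : p ∈ window k q) {r t : ℕ}
    (ht : t ∈ activeCols k p q r) : activeCols k p q (ell (ell r p) t) ⊂ activeCols k p q r := by
  refine lt_of_le_of_lt (fun s hs => ?_) (Finset.erase_ssubset ht)
  simp only [activeCols, Finset.mem_erase, Finset.mem_filter] at hs ht ⊢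
  obtain ⟨⟨hsp, hsk⟩, hs⟩ := hs
  have hst : s ≠ t := by
    rintro rfl
    have h₁ := coverParity_ne_zero hq hpq hsp hs
    have h₂ := coverParity_ne_zero hq hpq hsp ht.2
    simp only [dark_ell_ell, hsp, iff_true] at h₁
    tauto
  refine ⟨hst, ⟨hsp, hsk⟩, ?_⟩
  simpa only [dark_ell_ell, hsp, hst, iff_self, iff_true] using hs

theorem eq_zero_of_two_columns (hp : p < k) (hq : q < k) (hpq : p ∈ window k q)
    (hqp : q ∉ window k p)
    (hsupp : ∀ i < 2 ^ (k - 1), ∀ j < k, j ≠ p → j ≠ q → d i j = 0)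
    (hhor : ∀ i < 2 ^ (k - 1), hpar k d i = 0) (hbut : ∀ i < 2 ^ (k - 1), bpar k d i = 0) :
    ∀ i < 2 ^ (k - 1), ∀ j < k, d i j = 0 := by
  have hne : p ≠ q := by rintro rfl; exact hqp (self_mem_window hp)
  have hrow : ∀ i < 2 ^ (k - 1), d i q = d i p := fun i hi =>
    eq_of_hpar_eq_zero hp hq hne (hsupp i hi) (hhor i hi)
  have hcol : ∀ i < 2 ^ (k - 1), d i p = 0 :=
    eq_zero_of_eq_sum_of_descent (fun r => (activeCols k p q r).card) _ _ _
      (fun r hr => eq_sum_coverParity hp hqp hne hsupp hrow hbut hr)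
      fun r hr t ht hc =>
        ⟨ell_ell_lt_two_pow hr hp (Finset.mem_range.1 (Finset.mem_erase.1 ht).2),
          Finset.card_lt_card (activeCols_ell_ell_ssubset hq hpq (Finset.mem_filter.2 ⟨ht, hc⟩))⟩
  intro i hi j hj
  by_cases hjp : j = p
  · rw [hjp, hcol i hi]
  by_cases hjq : j = q
  · rw [hjq, hrow i hi, hcol i hi]
  exact hsupp i hi j hj hjp hjq

end TwoColumns

theorem recovery_two_info_nodes_general
    (k : ℕ) (hodd : Odd k)
    (j₀ j₁ : ℕ) (hj₀ : j₀ < k) (hj₁ : j₁ < k) (hne : j₀ ≠ j₁)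
    (a a' : ℕ → ℕ → ZMod 2)
    (hinfo : ∀ i' < 2 ^ (k - 1), ∀ j' < k, j' ≠ j₀ → j' ≠ j₁ → a i' j' = a' i' j')
    (hhor : ∀ i < 2 ^ (k - 1), hpar k a i = hpar k a' i)
    (hbut : ∀ i < 2 ^ (k - 1), bpar k a i = bpar k a' i) :
    ∀ i < 2 ^ (k - 1), ∀ j < k, a i j = a' i j := by
  have hsupp : ∀ i < 2 ^ (k - 1), ∀ j < k, j ≠ j₀ → j ≠ j₁ → (a - a') i j = 0 :=
    fun i hi j hj h₀ h₁ => sub_eq_zero.2 (hinfo i hi j hj h₀ h₁)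
  have hhor' : ∀ i < 2 ^ (k - 1), hpar k (a - a') i = 0 := fun i hi => by
    rw [hpar_sub, hhor i hi, sub_self]
  have hbut' : ∀ i < 2 ^ (k - 1), bpar k (a - a') i = 0 := fun i hi => by
    rw [bpar_sub, hbut i hi, sub_self]
  have hzero : ∀ i < 2 ^ (k - 1), ∀ j < k, (a - a') i j = 0 := by
    by_cases h : j₀ ∈ window k j₁
    · exact eq_zero_of_two_columns hj₀ hj₁ h
        ((mem_window_iff_not_mem_window hodd hj₁ hj₀ hne.symm).1 h) hsupp hhor' hbut'
    · exact eq_zero_of_two_columns hj₁ hj₀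
        ((mem_window_iff_not_mem_window hodd hj₀ hj₁ hne).2 h) h
        (fun i hi j hj h₁ h₀ => hsupp i hi j hj h₀ h₁) hhor' hbut'
  exact fun i hi j hj => sub_eq_zero.1 (hzero i hi j hj)

/-- Recovery from the loss of two information nodes: the information array is determined
by the `k - 2` surviving information columns together with both parity nodes. -/
theorem recovery_two_info_nodes
    (k : ℕ) (hk : 3 ≤ k) (hodd : Odd k)
    (j₀ j₁ : ℕ) (hj₀ : j₀ < k) (hj₁ : j₁ < k) (hne : j₀ ≠ j₁)
    (a a' : ℕ → ℕ → ZMod 2)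
    (hinfo : ∀ i' < 2 ^ (k - 1), ∀ j' < k, j' ≠ j₀ → j' ≠ j₁ → a i' j' = a' i' j')
    (hhor : ∀ i < 2 ^ (k - 1), hpar k a i = hpar k a' i)
    (hbut : ∀ i < 2 ^ (k - 1), bpar k a i = bpar k a' i) :
    ∀ i < 2 ^ (k - 1), ∀ j < k, a i j = a' i j :=
  recovery_two_info_nodes_general k hodd j₀ j₁ hj₀ hj₁ hne a a' hinfo hhor hbut
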